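/- Bob anticommutator bound: Let S = (ψ, A0, A1, B0, B1) be a CHSH strategy on finite-dimensional complex inner product spaces H_A, H_B, let ε ≥ 0, and suppose the bias satisfies β(S) ≥ 2√2 − ε. Then Re⟨ψ, (I ⊗ (B0B1 + B1B0)²) ψ⟩ ≤ c·ε, where c := 128√2. -/

import Mathlib

set_option maxHeartbeats 1000000
set_option synthInstance.maxHeartbeats 400000
set_option synthInstance.maxSize 2048

noncomputable section

open scoped TensorProduct
open Module

/-! ## The canonical inner product space structure on tensor products -/

section TensorInner

variable (E F : Type*) [NormedAddCommGroup E] [InnerProductSpace ℂ E] [FiniteDimensional ℂ E]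
  [NormedAddCommGroup F] [InnerProductSpace ℂ F] [FiniteDimensional ℂ F]

/-- Coordinate representation of `E ⊗[ℂ] F` with respect to the tensor product of
orthonormal bases of `E` and `F`. -/
def tensorRepr : (E ⊗[ℂ] F) ≃ₗ[ℂ]
    EuclideanSpace ℂ (Fin (finrank ℂ E) × Fin (finrank ℂ F)) :=
  (((stdOrthonormalBasis ℂ E).toBasis.tensorProduct
      (stdOrthonormalBasis ℂ F).toBasis).equivFun).trans
    (WithLp.linearEquiv 2 ℂ ((Fin (finrank ℂ E) × Fin (finrank ℂ F)) → ℂ)).symm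

/-- The canonical inner product on the tensor product of two finite-dimensional complex
inner product spaces; it satisfies `⟪a ⊗ b, c ⊗ d⟫ = ⟪a, c⟫ * ⟪b, d⟫`. -/
def tensorCore : InnerProductSpace.Core ℂ (E ⊗[ℂ] F) where
  inner x y := inner ℂ (tensorRepr E F x) (tensorRepr E F y)
  conj_inner_symm x y := inner_conj_symm (𝕜 := ℂ) (tensorRepr E F x) (tensorRepr E F y)
  re_inner_nonneg x := inner_self_nonneg (𝕜 := ℂ) (x := tensorRepr E F x)
  add_left x y z := by simp [map_add, inner_add_left]
  smul_left x y r := by simp [map_smul, inner_smul_left, mul_comm]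
  definite x h := by
    have h0 : tensorRepr E F x = 0 := inner_self_eq_zero.mp h
    simpa using (LinearEquiv.map_eq_zero_iff _).mp h0

noncomputable instance tensorNormedAddCommGroup : NormedAddCommGroup (E ⊗[ℂ] F) :=
  (tensorCore E F).toNormedAddCommGroup

noncomputable instance tensorInnerProductSpace : InnerProductSpace ℂ (E ⊗[ℂ] F) :=
  InnerProductSpace.ofCore (tensorCore E F).toCore

end TensorInner

notation "⟪" x ", " y "⟫" => (inner (𝕜 := ℂ) x y)

/-! ## Qubits, standard states and gates -/

/-- The qubit space `ℂ²`. -/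
abbrev Qubit := EuclideanSpace ℂ (Fin 2)

/-- The standard basis state `|0⟩`. -/
def ket0 : Qubit := EuclideanSpace.single 0 1

/-- The standard basis state `|1⟩`. -/
def ket1 : Qubit := EuclideanSpace.single 1 1

/-- The rank-one operator `|a⟩⟨b|` on an inner product space. -/
def ketbra {H : Type*} [NormedAddCommGroup H] [InnerProductSpace ℂ H] (a b : H) :
    H →ₗ[ℂ] H where
  toFun v := (inner ℂ b v : ℂ) • a
  map_add' u v := by simp [inner_add_right, add_smul]
  map_smul' c v := by simp [inner_smul_right, smul_smul]

/-- The projector `|0⟩⟨0|`. -/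
def proj0 : Qubit →ₗ[ℂ] Qubit := ketbra ket0 ket0

/-- The projector `|1⟩⟨1|`. -/
def proj1 : Qubit →ₗ[ℂ] Qubit := ketbra ket1 ket1

/-- The Pauli operator `σ_z = |0⟩⟨0| - |1⟩⟨1|`. -/
def pauliZ : Qubit →ₗ[ℂ] Qubit := ketbra ket0 ket0 - ketbra ket1 ket1

/-- The Pauli operator `σ_x = |0⟩⟨1| + |1⟩⟨0|`. -/
def pauliX : Qubit →ₗ[ℂ] Qubit := ketbra ket0 ket1 + ketbra ket1 ket0

/-- The Hadamard gate `H = (Z + X)/√2`. -/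
def Hadamard : Qubit →ₗ[ℂ] Qubit := ((Real.sqrt 2 : ℂ))⁻¹ • (pauliZ + pauliX)

/-- The reflected Hadamard gate `H' = (Z - X)/√2`. -/
def HadamardPrime : Qubit →ₗ[ℂ] Qubit := ((Real.sqrt 2 : ℂ))⁻¹ • (pauliZ - pauliX)

/-- The rotation `R = sin(π/8)·X + cos(π/8)·Z`, satisfying `RZR† = H`, `RXR† = H'`. -/
def Rotation : Qubit →ₗ[ℂ] Qubit :=
  (Real.sin (Real.pi / 8) : ℂ) • pauliX + (Real.cos (Real.pi / 8) : ℂ) • pauliZ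

/-! ## Bell states -/

/-- The Bell state `|Φ+⟩ = (|00⟩ + |11⟩)/√2`. -/
def bellPhiPlus : Qubit ⊗[ℂ] Qubit :=
  ((Real.sqrt 2 : ℂ))⁻¹ • (ket0 ⊗ₜ[ℂ] ket0 + ket1 ⊗ₜ[ℂ] ket1)

/-- The Bell state `|Φ−⟩ = (|00⟩ − |11⟩)/√2`. -/
def bellPhiMinus : Qubit ⊗[ℂ] Qubit :=
  ((Real.sqrt 2 : ℂ))⁻¹ • (ket0 ⊗ₜ[ℂ] ket0 - ket1 ⊗ₜ[ℂ] ket1)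

/-- The Bell state `|Ψ+⟩ = (|01⟩ + |10⟩)/√2`. -/
def bellPsiPlus : Qubit ⊗[ℂ] Qubit :=
  ((Real.sqrt 2 : ℂ))⁻¹ • (ket0 ⊗ₜ[ℂ] ket1 + ket1 ⊗ₜ[ℂ] ket0)

/-- The Bell state `|Ψ−⟩ = (|01⟩ − |10⟩)/√2`. -/
def bellPsiMinus : Qubit ⊗[ℂ] Qubit :=
  ((Real.sqrt 2 : ℂ))⁻¹ • (ket0 ⊗ₜ[ℂ] ket1 - ket1 ⊗ₜ[ℂ] ket0)

/-! ## Binary observables and CHSH strategies -/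

/-- A binary observable: a symmetric (self-adjoint) involution. -/
structure IsBinaryObservable {H : Type*} [NormedAddCommGroup H] [InnerProductSpace ℂ H]
    (A : H →ₗ[ℂ] H) : Prop where
  symm : A.IsSymmetric
  sq_one : A ∘ₗ A = LinearMap.id

variable {H_A H_B : Type*}
  [NormedAddCommGroup H_A] [InnerProductSpace ℂ H_A] [FiniteDimensional ℂ H_A]
  [NormedAddCommGroup H_B] [InnerProductSpace ℂ H_B] [FiniteDimensional ℂ H_B]

/-- A CHSH strategy: a shared unit state together with two binary observables per party. -/
structure CHSHStrategy (H_A H_B : Type*)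
    [NormedAddCommGroup H_A] [InnerProductSpace ℂ H_A] [FiniteDimensional ℂ H_A]
    [NormedAddCommGroup H_B] [InnerProductSpace ℂ H_B] [FiniteDimensional ℂ H_B] where
  psi : H_A ⊗[ℂ] H_B
  psi_norm : ‖psi‖ = 1
  A0 : H_A →ₗ[ℂ] H_A
  A1 : H_A →ₗ[ℂ] H_A
  B0 : H_B →ₗ[ℂ] H_B
  B1 : H_B →ₗ[ℂ] H_B
  A0_bin : IsBinaryObservable A0
  A1_bin : IsBinaryObservable A1
  B0_bin : IsBinaryObservable B0
  B1_bin : IsBinaryObservable B1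

/-- The general CHSH operator `A0⊗B0 + A0⊗B1 + A1⊗B0 − A1⊗B1`. -/
def CHSH_op (A0 A1 : H_A →ₗ[ℂ] H_A) (B0 B1 : H_B →ₗ[ℂ] H_B) :
    H_A ⊗[ℂ] H_B →ₗ[ℂ] H_A ⊗[ℂ] H_B :=
  TensorProduct.map A0 B0 + TensorProduct.map A0 B1 +
    TensorProduct.map A1 B0 - TensorProduct.map A1 B1

/-- The CHSH bias `β(S) = Re⟨ψ, CHSH ψ⟩` of a strategy. -/
def chshBias (S : CHSHStrategy H_A H_B) : ℝ :=
  (⟪S.psi, (CHSH_op S.A0 S.A1 S.B0 S.B1) S.psi⟫).re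

/-- Alice's observable acting on the shared state. -/
def applyAlice (A : H_A →ₗ[ℂ] H_A) : H_A ⊗[ℂ] H_B →ₗ[ℂ] H_A ⊗[ℂ] H_B :=
  TensorProduct.map A LinearMap.id

/-- Bob's observable acting on the shared state. -/
def applyBob (B : H_B →ₗ[ℂ] H_B) : H_A ⊗[ℂ] H_B →ₗ[ℂ] H_A ⊗[ℂ] H_B :=
  TensorProduct.map LinearMap.id B

/-! ## The extraction circuit -/

variable {H : Type*} [NormedAddCommGroup H] [InnerProductSpace ℂ H] [FiniteDimensional ℂ H]

/-- Ancilla embedding `v ↦ |aux⟩ ⊗ v`. -/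
def embed (aux : Qubit) : H →ₗ[ℂ] (Qubit ⊗[ℂ] H) :=
  (TensorProduct.mk ℂ Qubit H) aux

/-- Controlled gate `|0⟩⟨0| ⊗ I + |1⟩⟨1| ⊗ A`. -/
def controlGate (A : H →ₗ[ℂ] H) : (Qubit ⊗[ℂ] H) →ₗ[ℂ] (Qubit ⊗[ℂ] H) :=
  TensorProduct.map proj0 (LinearMap.id : H →ₗ[ℂ] H) + TensorProduct.map proj1 A

/-- The extraction unitary `U_A = C_{A1}(H ⊗ I)C_{A0}(H ⊗ I)`. -/
def unitaryUA (A0 A1 : H →ₗ[ℂ] H) : (Qubit ⊗[ℂ] H) →ₗ[ℂ] (Qubit ⊗[ℂ] H) :=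
  (controlGate A1) ∘ₗ (TensorProduct.map Hadamard LinearMap.id) ∘ₗ
    (controlGate A0) ∘ₗ (TensorProduct.map Hadamard LinearMap.id)

/-- Alice's extractor `V_A = U_A (|0⟩ ⊗ ·)`. -/
def VA (A0 A1 : H →ₗ[ℂ] H) : H →ₗ[ℂ] (Qubit ⊗[ℂ] H) :=
  (unitaryUA A0 A1) ∘ₗ (embed ket0)

/-- Bob's rotated extraction unitary `U_B = (R ⊗ I) U_A(B0,B1) (R† ⊗ I)`. -/
def unitaryUB (B0 B1 : H →ₗ[ℂ] H) : (Qubit ⊗[ℂ] H) →ₗ[ℂ] (Qubit ⊗[ℂ] H) :=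
  (TensorProduct.map Rotation LinearMap.id) ∘ₗ (unitaryUA B0 B1) ∘ₗ
    (TensorProduct.map (LinearMap.adjoint Rotation) LinearMap.id)

/-- Bob's rotated ancilla `|aux⟩ = R|0⟩`. -/
def auxState : Qubit := Rotation ket0

/-- Bob's extractor `V_B = U_B (|aux⟩ ⊗ ·)`. -/
def VB (B0 B1 : H →ₗ[ℂ] H) : H →ₗ[ℂ] (Qubit ⊗[ℂ] H) :=
  (unitaryUB B0 B1) ∘ₗ (embed auxState)

/-! ## Tensor regrouping -/

/-- The canonical regrouping isomorphism
`(ℂ² ⊗ H_A) ⊗ (ℂ² ⊗ H_B) ≃ (ℂ² ⊗ ℂ²) ⊗ (H_A ⊗ H_B)`. -/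
def regSwap (H_A H_B : Type*)
    [NormedAddCommGroup H_A] [InnerProductSpace ℂ H_A] [FiniteDimensional ℂ H_A]
    [NormedAddCommGroup H_B] [InnerProductSpace ℂ H_B] [FiniteDimensional ℂ H_B] :
    ((Qubit ⊗[ℂ] H_A) ⊗[ℂ] (Qubit ⊗[ℂ] H_B)) ≃ₗ[ℂ]
      ((Qubit ⊗[ℂ] Qubit) ⊗[ℂ] (H_A ⊗[ℂ] H_B)) :=
  (TensorProduct.assoc ℂ Qubit H_A (Qubit ⊗[ℂ] H_B)).trans <|
    (TensorProduct.congr (LinearEquiv.refl ℂ Qubit)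
      (((TensorProduct.assoc ℂ H_A Qubit H_B).symm.trans
        (TensorProduct.congr (TensorProduct.comm ℂ H_A Qubit) (LinearEquiv.refl ℂ H_B))).trans
          (TensorProduct.assoc ℂ Qubit H_A H_B))).trans
      (TensorProduct.assoc ℂ Qubit Qubit (H_A ⊗[ℂ] H_B)).symm

/-! ## The canonical two-qubit CHSH operator and the constants -/

/-- The canonical two-qubit CHSH operator `K = Z⊗H + Z⊗H' + X⊗H − X⊗H'`. -/
def K : (Qubit ⊗[ℂ] Qubit) →ₗ[ℂ] (Qubit ⊗[ℂ] Qubit) :=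
  TensorProduct.map pauliZ Hadamard + TensorProduct.map pauliZ HadamardPrime +
    TensorProduct.map pauliX Hadamard - TensorProduct.map pauliX HadamardPrime

/-- The constant `c = 128√2` in the anticommutator bounds. -/
def cConst : ℝ := 128 * Real.sqrt 2

/-- The error function `δ(ε) = ε + 4√(cε)`. -/
def delta (ε : ℝ) : ℝ := ε + 4 * Real.sqrt (cConst * ε)

end

/-
Write `Tᵢ = Aᵢ ⊗ I` and `Qⱼ = I ⊗ Bⱼ`. The CHSH operator has the sum-of-squares decomposition
`8 - 2√2 Re⟨ψ, CHSH ψ⟩ = ‖√2 T₀ψ - (Q₀ + Q₁)ψ‖² + ‖√2 T₁ψ - (Q₀ - Q₁)ψ‖²`, so the residual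
`u = √2 T₀ψ - (Q₀ + Q₁)ψ` satisfies `‖u‖² ≤ 2√2 ε`. Applying `Q₀ + Q₁` to `(Q₀ + Q₁)ψ = √2 T₀ψ - u`
and using that `T₀` commutes with the `Qⱼ` and that all of them square to the identity gives
`(Q₀Q₁ + Q₁Q₀)ψ = -(√2 T₀ + Q₀ + Q₁) u`, a vector of norm at most `(2 + √2)‖u‖`. As the
anticommutator is symmetric, the quantity to bound is its squared norm, at most
`(2 + √2)² · 2√2 ε ≤ 128√2 ε`.
-/

-- `CHSHStrategy.psi_norm` is measured with `tensorNormedAddCommGroup`; everything else here uses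
-- Mathlib's tensor-product inner product, which `norm_tensorNormedAddCommGroup` identifies with it.
attribute [-instance] tensorNormedAddCommGroup tensorInnerProductSpace

open scoped TensorProduct

lemma norm_tensorNormedAddCommGroup {E F : Type*}
    [NormedAddCommGroup E] [InnerProductSpace ℂ E] [FiniteDimensional ℂ E]
    [NormedAddCommGroup F] [InnerProductSpace ℂ F] [FiniteDimensional ℂ F] (x : E ⊗[ℂ] F) :
    @norm _ (tensorNormedAddCommGroup E F).toNorm x = ‖x‖ := by
  have h1 : @norm _ (tensorNormedAddCommGroup E F).toNorm x = ‖tensorRepr E F x‖ := by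
    show √(RCLike.re (inner ℂ (tensorRepr E F x) (tensorRepr E F x))) = _
    rw [norm_eq_sqrt_re_inner (𝕜 := ℂ)]
  have h2 : tensorRepr E F x
      = ((stdOrthonormalBasis ℂ E).tensorProduct (stdOrthonormalBasis ℂ F)).repr x := by
    ext i
    simp [tensorRepr, ← OrthonormalBasis.toBasis_tensorProduct]
  rw [h1, h2, LinearIsometryEquiv.norm_map]

section Operators

variable {V : Type*} [NormedAddCommGroup V] [InnerProductSpace ℂ V]

lemma LinearMap.IsSymmetric.anticommutator {A B : V →ₗ[ℂ] V} (hA : A.IsSymmetric)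
    (hB : B.IsSymmetric) : (A ∘ₗ B + B ∘ₗ A).IsSymmetric := by
  intro x y
  simp only [LinearMap.add_apply, LinearMap.comp_apply, inner_add_left, inner_add_right, hA _ _,
    hB _ _]
  exact add_comm _ _

lemma LinearMap.IsSymmetric.re_inner_comp_self_apply {D : V →ₗ[ℂ] V} (hD : D.IsSymmetric)
    (ψ : V) : (⟪ψ, (D ∘ₗ D) ψ⟫).re = ‖D ψ‖ ^ 2 := by
  rw [LinearMap.comp_apply, ← hD]
  exact inner_self_eq_norm_sq (𝕜 := ℂ) (D ψ)

namespace IsBinaryObservable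

variable {A : V →ₗ[ℂ] V}

protected lemma id : IsBinaryObservable (LinearMap.id : V →ₗ[ℂ] V) :=
  ⟨LinearMap.IsSymmetric.id, rfl⟩

lemma apply_apply (hA : IsBinaryObservable A) (x : V) : A (A x) = x :=
  LinearMap.congr_fun hA.sq_one x

lemma norm_apply (hA : IsBinaryObservable A) (x : V) : ‖A x‖ = ‖x‖ := by
  refine (sq_eq_sq₀ (norm_nonneg _) (norm_nonneg _)).mp ?_
  rw [← inner_self_eq_norm_sq (𝕜 := ℂ), ← inner_self_eq_norm_sq (𝕜 := ℂ), hA.symm,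
    hA.apply_apply]

end IsBinaryObservable

end Operators

section TensorProduct

variable {E F : Type*} [NormedAddCommGroup E] [InnerProductSpace ℂ E]
  [NormedAddCommGroup F] [InnerProductSpace ℂ F] {A : E →ₗ[ℂ] E} {B : F →ₗ[ℂ] F}

lemma LinearMap.IsSymmetric.tensorMap (hA : A.IsSymmetric) (hB : B.IsSymmetric) :
    (TensorProduct.map A B).IsSymmetric := by
  intro x y
  induction x using TensorProduct.induction_on with
  | zero => simp
  | add x₁ x₂ h₁ h₂ => simp only [map_add, inner_add_left, h₁, h₂]
  | tmul a b =>
    induction y using TensorProduct.induction_on with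
    | zero => simp
    | add y₁ y₂ h₁ h₂ => simp only [map_add, inner_add_right, h₁, h₂]
    | tmul c d => simp only [TensorProduct.map_tmul, TensorProduct.inner_tmul, hA a c, hB b d]

lemma IsBinaryObservable.tensorMap (hA : IsBinaryObservable A) (hB : IsBinaryObservable B) :
    IsBinaryObservable (TensorProduct.map A B) :=
  ⟨hA.symm.tensorMap hB.symm, by rw [← TensorProduct.map_comp, hA.sq_one, hB.sq_one,
    TensorProduct.map_id]⟩

end TensorProduct

lemma commute_rTensor_lTensor {E F : Type*} [AddCommGroup E] [Module ℂ E] [AddCommGroup F]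
    [Module ℂ F] (f : E →ₗ[ℂ] E) (g : F →ₗ[ℂ] F) : Commute (f.rTensor F) (g.lTensor E) :=
  (LinearMap.rTensor_comp_lTensor (f := f) (g := g)).trans
    (LinearMap.lTensor_comp_rTensor (f := f) (g := g)).symm

section CHSH

variable {V : Type*} [NormedAddCommGroup V] [InnerProductSpace ℂ V] {A0 A1 B0 B1 : V →ₗ[ℂ] V}

lemma norm_sq_add_norm_sq_chsh_residual (hA0 : IsBinaryObservable A0)
    (hA1 : IsBinaryObservable A1) (hB0 : IsBinaryObservable B0) (hB1 : IsBinaryObservable B1)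
    (ψ : V) :
    ‖(√2 : ℂ) • A0 ψ - (B0 ψ + B1 ψ)‖ ^ 2 + ‖(√2 : ℂ) • A1 ψ - (B0 ψ - B1 ψ)‖ ^ 2 =
      8 * ‖ψ‖ ^ 2 - 2 * √2 * (⟪ψ, (A0 ∘ₗ B0 + A0 ∘ₗ B1 + A1 ∘ₗ B0 - A1 ∘ₗ B1) ψ⟫).re := by
  have parallelogram := parallelogram_law_with_norm ℂ (B0 ψ) (B1 ψ)
  have hs : √2 ^ 2 = 2 := Real.sq_sqrt zero_le_two
  have move0 (x : V) : ⟪ψ, A0 x⟫ = ⟪A0 ψ, x⟫ := (hA0.symm ψ x).symm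
  have move1 (x : V) : ⟪ψ, A1 x⟫ = ⟪A1 ψ, x⟫ := (hA1.symm ψ x).symm
  simp only [LinearMap.add_apply, LinearMap.sub_apply, LinearMap.comp_apply]
  rw [@norm_sub_sq ℂ, @norm_sub_sq ℂ]
  simp only [RCLike.re_to_complex, inner_smul_left, Complex.conj_ofReal, Complex.re_ofReal_mul,
    norm_smul, Complex.norm_real, Real.norm_of_nonneg (Real.sqrt_nonneg 2), inner_add_right,
    inner_sub_right, Complex.add_re, Complex.sub_re, hA0.norm_apply, hA1.norm_apply,
    hB0.norm_apply, hB1.norm_apply, move0, move1] at parallelogram ⊢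
  linear_combination (‖ψ‖ ^ 2 * 2) * hs + parallelogram

lemma anticommutator_apply_eq_of_residual (hA : A0 ∘ₗ A0 = LinearMap.id)
    (hB0 : B0 ∘ₗ B0 = LinearMap.id) (hB1 : B1 ∘ₗ B1 = LinearMap.id) (h0 : Commute A0 B0)
    (h1 : Commute A0 B1) {ψ u : V} (hu : B0 ψ + B1 ψ = (√2 : ℂ) • A0 ψ - u) :
    B0 (B1 ψ) + B1 (B0 ψ) = -((√2 : ℂ) • A0 u + B0 u + B1 u) := by
  have hs : (√2 : ℂ) * √2 = 2 := by exact_mod_cast Real.mul_self_sqrt zero_le_two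
  have invA (x : V) : A0 (A0 x) = x := LinearMap.congr_fun hA x
  have inv0 (x : V) : B0 (B0 x) = x := LinearMap.congr_fun hB0 x
  have inv1 (x : V) : B1 (B1 x) = x := LinearMap.congr_fun hB1 x
  have c0 (x : V) : B0 (A0 x) = A0 (B0 x) := (LinearMap.congr_fun h0 x).symm
  have c1 (x : V) : B1 (A0 x) = A0 (B1 x) := (LinearMap.congr_fun h1 x).symm
  have square :
      B0 (B0 ψ + B1 ψ) + B1 (B0 ψ + B1 ψ) = (2 : ℂ) • ψ + (B0 (B1 ψ) + B1 (B0 ψ)) := by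
    rw [map_add, map_add, inv0, inv1, two_smul]
    abel
  have expand : B0 (B0 ψ + B1 ψ) + B1 (B0 ψ + B1 ψ) =
      (2 : ℂ) • ψ - ((√2 : ℂ) • A0 u + B0 u + B1 u) := by
    calc B0 (B0 ψ + B1 ψ) + B1 (B0 ψ + B1 ψ)
        = (√2 : ℂ) • A0 (B0 ψ + B1 ψ) - (B0 u + B1 u) := by
          conv_lhs => rw [hu]
          simp only [map_sub, map_smul, c0, c1, map_add, smul_add]
          abel
      _ = (2 : ℂ) • ψ - ((√2 : ℂ) • A0 u + B0 u + B1 u) := by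
          rw [hu, map_sub, map_smul, invA, smul_sub, smul_smul, hs]
          abel
  rw [square] at expand
  exact add_left_cancel (expand.trans (sub_eq_add_neg _ _))

lemma norm_anticommutator_apply_le_of_residual (hA : IsBinaryObservable A0)
    (hB0 : IsBinaryObservable B0) (hB1 : IsBinaryObservable B1) (h0 : Commute A0 B0)
    (h1 : Commute A0 B1) {ψ u : V} (hu : B0 ψ + B1 ψ = (√2 : ℂ) • A0 ψ - u) :
    ‖B0 (B1 ψ) + B1 (B0 ψ)‖ ≤ (√2 + 2) * ‖u‖ := by
  rw [anticommutator_apply_eq_of_residual hA.sq_one hB0.sq_one hB1.sq_one h0 h1 hu, norm_neg]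
  calc ‖(√2 : ℂ) • A0 u + B0 u + B1 u‖ ≤ ‖(√2 : ℂ) • A0 u‖ + ‖B0 u‖ + ‖B1 u‖ := norm_add₃_le
    _ = (√2 + 2) * ‖u‖ := by
      rw [norm_smul, Complex.norm_real, Real.norm_of_nonneg (Real.sqrt_nonneg 2), hA.norm_apply,
        hB0.norm_apply, hB1.norm_apply]
      ring

theorem re_inner_anticommutator_sq_le (hA0 : IsBinaryObservable A0)
    (hA1 : IsBinaryObservable A1) (hB0 : IsBinaryObservable B0) (hB1 : IsBinaryObservable B1)
    (h0 : Commute A0 B0) (h1 : Commute A0 B1) {ψ : V} (hψ : ‖ψ‖ = 1) {ε : ℝ}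
    (hbias : 2 * √2 - ε ≤ (⟪ψ, (A0 ∘ₗ B0 + A0 ∘ₗ B1 + A1 ∘ₗ B0 - A1 ∘ₗ B1) ψ⟫).re) :
    (⟪ψ, ((B0 ∘ₗ B1 + B1 ∘ₗ B0) ∘ₗ (B0 ∘ₗ B1 + B1 ∘ₗ B0)) ψ⟫).re ≤ 128 * √2 * ε := by
  have hs : √2 ^ 2 = 2 := Real.sq_sqrt zero_le_two
  have hs1 : 1 ≤ √2 := Real.one_lt_sqrt_two.le
  set u := (√2 : ℂ) • A0 ψ - (B0 ψ + B1 ψ)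
  have hu_sq : ‖u‖ ^ 2 ≤ 2 * √2 * ε := by
    have sos := norm_sq_add_norm_sq_chsh_residual hA0 hA1 hB0 hB1 ψ
    rw [hψ] at sos
    nlinarith [sq_nonneg ‖(√2 : ℂ) • A1 ψ - (B0 ψ - B1 ψ)‖]
  have hε : 0 ≤ ε := by nlinarith [sq_nonneg ‖u‖]
  have hD : ‖B0 (B1 ψ) + B1 (B0 ψ)‖ ≤ (√2 + 2) * ‖u‖ :=
    norm_anticommutator_apply_le_of_residual hA0 hB0 hB1 h0 h1 (sub_sub_cancel _ _).symm
  rw [(hB0.symm.anticommutator hB1.symm).re_inner_comp_self_apply]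
  calc ‖B0 (B1 ψ) + B1 (B0 ψ)‖ ^ 2 ≤ ((√2 + 2) * ‖u‖) ^ 2 := by gcongr
    _ ≤ (√2 + 2) ^ 2 * (2 * √2 * ε) := by rw [mul_pow]; gcongr
    _ ≤ 128 * √2 * ε := by nlinarith

end CHSH

theorem bob_anticommutator_bound_general
    {H_A H_B : Type*}
    [NormedAddCommGroup H_A] [InnerProductSpace ℂ H_A] [FiniteDimensional ℂ H_A]
    [NormedAddCommGroup H_B] [InnerProductSpace ℂ H_B] [FiniteDimensional ℂ H_B]
    (S : CHSHStrategy H_A H_B) (ε : ℝ)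
    (hBias : chshBias S ≥ 2 * Real.sqrt 2 - ε) :
    (⟪S.psi, (TensorProduct.map (LinearMap.id : H_A →ₗ[ℂ] H_A)
        ((S.B0 ∘ₗ S.B1 + S.B1 ∘ₗ S.B0) ∘ₗ (S.B0 ∘ₗ S.B1 + S.B1 ∘ₗ S.B0))) S.psi⟫).re
      ≤ cConst * ε := by
  obtain ⟨ψ, hψ, A0, A1, B0, B1, hA0, hA1, hB0, hB1⟩ := S
  rw [norm_tensorNormedAddCommGroup] at hψ
  simp only [chshBias, CHSH_op, ← LinearMap.rTensor_comp_lTensor] at hBias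
  simp only [← LinearMap.lTensor_def, LinearMap.lTensor_comp, LinearMap.lTensor_add]
  exact re_inner_anticommutator_sq_le (hA0.tensorMap .id) (hA1.tensorMap .id)
    (IsBinaryObservable.id.tensorMap hB0) (IsBinaryObservable.id.tensorMap hB1)
    (commute_rTensor_lTensor A0 B0) (commute_rTensor_lTensor A0 B1) hψ hBias

/-- **Bob anticommutator bound.** -/
theorem bob_anticommutator_bound
    {H_A H_B : Type*}
    [NormedAddCommGroup H_A] [InnerProductSpace ℂ H_A] [FiniteDimensional ℂ H_A]
    [NormedAddCommGroup H_B] [InnerProductSpace ℂ H_B] [FiniteDimensional ℂ H_B]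
    (S : CHSHStrategy H_A H_B) (ε : ℝ) (hε : 0 ≤ ε)
    (hBias : chshBias S ≥ 2 * Real.sqrt 2 - ε) :
    (⟪S.psi, (TensorProduct.map (LinearMap.id : H_A →ₗ[ℂ] H_A)
        ((S.B0 ∘ₗ S.B1 + S.B1 ∘ₗ S.B0) ∘ₗ (S.B0 ∘ₗ S.B1 + S.B1 ∘ₗ S.B0))) S.psi⟫).re
      ≤ cConst * ε :=
  bob_anticommutator_bound_general S ε hBias
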